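/- arXiv:2012.11118 — 2 statements merged into one kernel-verified Lean document; each statement's English description precedes it below -/
import Mathlib

section
/- For every 3×3 real symmetric matrix σ, with m = tr(σ)/3, p = (1/6)·Σᵢⱼ((σ−mI)ᵢⱼ)² and q = (1/2)·det(σ−mI), one has p³ ≥ q². (This is the nonnegativity of the quantity p³ − q² under the square root in Cardano's trigonometric angle θ = (1/3)·arctan(√(p³−q²)/q), and it holds because all eigenvalues of σ are real.) -/
/-!
The eigenvalues `x, y, z` of the traceless symmetric matrix `σ - m • 1` are real, with
`x + y + z = 0`, `6 p = x² + y² + z²` and `2 q = x y z`. Under `x + y + z = 0` one has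
`108 (p³ - q²) = ((x - y) (y - z) (z - x))²`: up to a constant, `p³ - q²` is the discriminant
of the characteristic polynomial, a square because the roots are real.
-/

open Matrix

theorem sq_mul_mul_div_two_le_of_add_add_eq_zero {x y z : ℝ} (h : x + y + z = 0) :
    (x * y * z / 2) ^ 2 ≤ ((x ^ 2 + y ^ 2 + z ^ 2) / 6) ^ 3 := by
  have discr : 108 * (((x ^ 2 + y ^ 2 + z ^ 2) / 6) ^ 3 - (x * y * z / 2) ^ 2)
      = ((x - y) * (y - z) * (z - x)) ^ 2 := by
    obtain rfl : z = -(x + y) := by linarith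
    ring
  nlinarith [sq_nonneg ((x - y) * (y - z) * (z - x))]

namespace Matrix

theorem sum_sum_sq_eq_trace_mul_transpose {m n R : Type*} [Fintype m] [Fintype n]
    [CommSemiring R] (A : Matrix m n R) :
    ∑ i, ∑ j, A i j ^ 2 = (A * Aᵀ).trace := by
  simp [trace, mul_apply, sq]

theorem trace_sub_trace_div_card_smul_one {n K : Type*} [Fintype n] [DecidableEq n] [Nonempty n]
    [Field K] [CharZero K] (A : Matrix n n K) :
    (A - (A.trace / Fintype.card n) • (1 : Matrix n n K)).trace = 0 := by
  rw [trace_sub, trace_smul, trace_one, smul_eq_mul, div_mul_cancel₀ _ (by simp), sub_self]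

theorem IsHermitian.trace_mul_self_eq_sum_sq_eigenvalues {n 𝕜 : Type*} [Fintype n]
    [DecidableEq n] [RCLike 𝕜] {A : Matrix n n 𝕜} (hA : A.IsHermitian) :
    (A * A).trace = ∑ i, (hA.eigenvalues i : 𝕜) ^ 2 := by
  conv_lhs => rw [hA.spectral_theorem, ← map_mul]
  rw [Unitary.conjStarAlgAut_apply, trace_mul_cycle, Unitary.coe_star_mul_self, one_mul,
    diagonal_mul_diagonal, trace_diagonal]
  simp [sq]

end Matrix

/-- for a 3×3 real symmetric matrix, with m = tr(σ)/3,
p = (1/6)Σ((σ−mI)ᵢⱼ)², q = (1/2)det(σ−mI), one has p³ ≥ q². -/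
theorem p_cubed_ge_q_squared (σ : Matrix (Fin 3) (Fin 3) ℝ) (hσ : σ.IsSymm)
    (m p q : ℝ)
    (hm : m = σ.trace / 3)
    (hp : p = (1/6) * ∑ i, ∑ j, ((σ - m • (1 : Matrix (Fin 3) (Fin 3) ℝ)) i j)^2)
    (hq : q = (1/2) * (σ - m • (1 : Matrix (Fin 3) (Fin 3) ℝ)).det) :
    p^3 ≥ q^2 := by
  set A := σ - m • (1 : Matrix (Fin 3) (Fin 3) ℝ)
  have hA_symm : A.IsSymm := hσ.sub (isSymm_one.smul m)
  have hA : A.IsHermitian := hA_symm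
  have h_trace : ∑ i, hA.eigenvalues i = 0 := by
    have h := trace_sub_trace_div_card_smul_one σ
    rw [Fintype.card_fin, Nat.cast_ofNat, ← hm] at h
    exact_mod_cast hA.trace_eq_sum_eigenvalues.symm.trans h
  have h_sq : ∑ i, ∑ j, A i j ^ 2 = ∑ i, hA.eigenvalues i ^ 2 := by
    rw [sum_sum_sq_eq_trace_mul_transpose, hA_symm.eq]
    simpa using hA.trace_mul_self_eq_sum_sq_eigenvalues
  have h_det : A.det = ∏ i, hA.eigenvalues i := by simpa using hA.det_eq_prod_eigenvalues
  rw [Fin.sum_univ_three] at h_trace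
  rw [Fin.prod_univ_three] at h_det
  rw [hp, hq, h_sq, Fin.sum_univ_three, h_det, ge_iff_le]
  convert sq_mul_mul_div_two_le_of_add_add_eq_zero h_trace using 2 <;> ring
end

section
/- Let σ be a 3×3 real symmetric matrix with m = tr(σ)/3, p = (1/6)·Σᵢⱼ((σ−mI)ᵢⱼ)², q = (1/2)·det(σ−mI). Assume p > 0 and let θ ∈ [0, π/3] satisfy cos(3θ) = q·p^{−3/2}. Then the eigenvalues of σ, counted with multiplicity, are λ₁ = m + 2√p·cos(θ), λ₂ = m − √p·(cos(θ) + √3·sin(θ)), λ₃ = m − √p·(cos(θ) − √3·sin(θ)); equivalently det(σ − λ·I) = (λ₁−λ)(λ₂−λ)(λ₃−λ) for all real λ. Moreover λ₂ = m − 2√p·cos(θ − π/3) and λ₃ = m − 2√p·cos(θ + π/3). -/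
/-!
After the shift `B = σ - m • 1`, the matrix `B` is traceless and symmetric, so its
characteristic polynomial is the depressed cubic `det (B - y • 1) = -y³ + 3 p y + 2 q`.
Substituting `y = 2 √p cos φ` turns it into `2 p^(3/2) (cos 3θ - cos 3φ)` by the
triple-angle formula, whose zeros are `φ = θ` and `φ = θ ± 2π/3`.
-/

open Matrix Real

theorem Matrix.two_mul_det_sub_smul_one_of_isSymm_of_trace_eq_zero {R : Type*} [CommRing R]
    {B : Matrix (Fin 3) (Fin 3) R} (hB : B.IsSymm) (htr : B.trace = 0) (x : R) :
    2 * (B - x • 1).det = -2 * x ^ 3 + (∑ i, ∑ j, B i j ^ 2) * x + 2 * B.det := by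
  rw [trace_fin_three] at htr
  simp only [det_fin_three, Fin.sum_univ_three, sub_apply, smul_apply, one_apply, smul_eq_mul,
    hB.apply 0 1, hB.apply 0 2, hB.apply 1 2, Fin.isValue, ↓reduceIte, Fin.reduceEq, mul_one,
    mul_zero, sub_zero]
  linear_combination (2 * x ^ 2 - x * (B 0 0 + B 1 1 + B 2 2)) * htr

theorem depressed_cubic_eq_trig_product (s θ y : ℝ) :
    -y ^ 3 + 3 * s ^ 2 * y + 2 * s ^ 3 * cos (3 * θ) =
      (2 * s * cos θ - y) * (-s * (cos θ + √3 * sin θ) - y) *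
        (-s * (cos θ - √3 * sin θ) - y) := by
  have h3 : √3 ^ 2 = 3 := sq_sqrt (by norm_num)
  rw [cos_three_mul]
  linear_combination (6 * s ^ 3 * cos θ - 3 * s ^ 2 * y) * sin_sq_add_cos_sq θ
    + sin θ ^ 2 * (2 * s ^ 3 * cos θ - s ^ 2 * y) * h3

theorem two_mul_cos_sub_pi_div_three (θ : ℝ) :
    2 * cos (θ - π / 3) = cos θ + √3 * sin θ := by
  rw [cos_sub, cos_pi_div_three, sin_pi_div_three]; ring

theorem two_mul_cos_add_pi_div_three (θ : ℝ) :
    2 * cos (θ + π / 3) = cos θ - √3 * sin θ := by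
  rw [cos_add, cos_pi_div_three, sin_pi_div_three]; ring

theorem Real.rpow_neg_three_div_two {p : ℝ} (hp : 0 ≤ p) :
    p ^ (-(3 : ℝ) / 2) = (√p ^ 3)⁻¹ := by
  rw [neg_div, rpow_neg hp, sqrt_eq_rpow, ← rpow_natCast, ← rpow_mul hp]
  norm_num

theorem cardano_eigenvalues_general (σ : Matrix (Fin 3) (Fin 3) ℝ) (hσ : σ.IsSymm)
    (m p q θ : ℝ)
    (hm : m = σ.trace / 3)
    (hp : p = (1/6) * ∑ i, ∑ j, ((σ - m • (1 : Matrix (Fin 3) (Fin 3) ℝ)) i j)^2)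
    (hq : q = (1/2) * (σ - m • (1 : Matrix (Fin 3) (Fin 3) ℝ)).det)
    (hppos : 0 < p)
    (hcos : Real.cos (3*θ) = q * p ^ (-(3:ℝ)/2)) :
    (∀ l : ℝ, (σ - l • (1 : Matrix (Fin 3) (Fin 3) ℝ)).det =
        ((m + 2 * Real.sqrt p * Real.cos θ) - l) *
        ((m - Real.sqrt p * (Real.cos θ + Real.sqrt 3 * Real.sin θ)) - l) *
        ((m - Real.sqrt p * (Real.cos θ - Real.sqrt 3 * Real.sin θ)) - l)) ∧
    m - Real.sqrt p * (Real.cos θ + Real.sqrt 3 * Real.sin θ)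
        = m - 2 * Real.sqrt p * Real.cos (θ - Real.pi / 3) ∧
    m - Real.sqrt p * (Real.cos θ - Real.sqrt 3 * Real.sin θ)
        = m - 2 * Real.sqrt p * Real.cos (θ + Real.pi / 3) := by
  set B := σ - m • (1 : Matrix (Fin 3) (Fin 3) ℝ) with hB
  have hB_symm : B.IsSymm := hσ.sub (isSymm_one.smul m)
  have hB_trace : B.trace = 0 := by simp [hB, hm]
  have hsqrt_sq : √p ^ 2 = p := sq_sqrt hppos.le
  have hq_trig : q = √p ^ 3 * cos (3 * θ) := by
    have : √p ≠ 0 := (sqrt_pos.2 hppos).ne'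
    rw [hcos, rpow_neg_three_div_two hppos.le]
    field_simp
  refine ⟨fun l => ?_, by rw [← two_mul_cos_sub_pi_div_three]; ring,
    by rw [← two_mul_cos_add_pi_div_three]; ring⟩
  have hshift : σ - l • 1 = B - (l - m) • 1 := by rw [hB, sub_smul]; abel
  have hchar : (B - (l - m) • 1).det =
      -(l - m) ^ 3 + 3 * √p ^ 2 * (l - m) + 2 * √p ^ 3 * cos (3 * θ) := by
    linear_combination
      (1 / 2) * B.two_mul_det_sub_smul_one_of_isSymm_of_trace_eq_zero hB_symm hB_trace (l - m)
      - 3 * (l - m) * hsqrt_sq - 3 * (l - m) * hp - 2 * hq + 2 * hq_trig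
  rw [hshift, hchar, depressed_cubic_eq_trig_product]
  ring

/-- Cardano's trigonometric expressions for the eigenvalues of a
3×3 real symmetric matrix. -/
theorem cardano_eigenvalues (σ : Matrix (Fin 3) (Fin 3) ℝ) (hσ : σ.IsSymm)
    (m p q θ : ℝ)
    (hm : m = σ.trace / 3)
    (hp : p = (1/6) * ∑ i, ∑ j, ((σ - m • (1 : Matrix (Fin 3) (Fin 3) ℝ)) i j)^2)
    (hq : q = (1/2) * (σ - m • (1 : Matrix (Fin 3) (Fin 3) ℝ)).det)
    (hppos : 0 < p)
    (hθ : θ ∈ Set.Icc 0 (Real.pi / 3))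
    (hcos : Real.cos (3*θ) = q * p ^ (-(3:ℝ)/2)) :
    (∀ l : ℝ, (σ - l • (1 : Matrix (Fin 3) (Fin 3) ℝ)).det =
        ((m + 2 * Real.sqrt p * Real.cos θ) - l) *
        ((m - Real.sqrt p * (Real.cos θ + Real.sqrt 3 * Real.sin θ)) - l) *
        ((m - Real.sqrt p * (Real.cos θ - Real.sqrt 3 * Real.sin θ)) - l)) ∧
    m - Real.sqrt p * (Real.cos θ + Real.sqrt 3 * Real.sin θ)
        = m - 2 * Real.sqrt p * Real.cos (θ - Real.pi / 3) ∧
    m - Real.sqrt p * (Real.cos θ - Real.sqrt 3 * Real.sin θ)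
        = m - 2 * Real.sqrt p * Real.cos (θ + Real.pi / 3) :=
  cardano_eigenvalues_general σ hσ m p q θ hm hp hq hppos hcos
end
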